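/- arXiv:2411.19351 — 5 statements merged into one kernel-verified Lean document; each statement's English description precedes it below -/
import Mathlib

section
/- Let p be a prime and n ≥ 2 with p > n, and fix k ∈ F_p with k ≠ 0. The number of vectors (x_1,...,x_{n-1}) ∈ F_p^{n-1} such that x_i ≠ 0 for all i, x_i ≠ k for all i, x_{i_2} ≠ x_{i_1} for all i_1 < i_2, and x_{i_2} - x_{i_1} ≠ k for all i_1 ≤ i_2, equals (p-n)^{n-1}. -/
/-!
Dividing by `k` and subtracting `2` identifies `{x | x ≠ 0, x ≠ k}` with `Fin (p - 2)` and turns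
`x_j - x_i = k` into `z_j = z_i + 1`, so one counts the tuples `z : Fin m → Fin q` with distinct
entries, none the successor of an earlier one. Removing the first entry `v` of such a tuple in
`Fin (q + 1)` and closing the gap at `v` leaves such a tuple `w` in `Fin q` avoiding `v` (the old
`v + 1`); conversely every `w` of length `m` extends for exactly the `q + 1 - m` values `v` that
`w` does not take. Since `q + 1 - m` is unchanged, the count is `(q + 1 - m) ^ m`.
-/

open Finset

def SuccFree {m q : ℕ} (z : Fin m → Fin q) : Prop :=
  ∀ i j, i < j → z i ≠ z j ∧ (z j : ℕ) ≠ z i + 1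

instance {m q : ℕ} : DecidablePred (SuccFree (m := m) (q := q)) :=
  fun z => by unfold SuccFree; infer_instance

theorem SuccFree.injective {m q : ℕ} {z : Fin m → Fin q} (hz : SuccFree z) :
    Function.Injective z := by
  intro a b hab
  by_contra hne
  rcases lt_or_gt_of_ne hne with h | h
  · exact (hz a b h).1 hab
  · exact (hz b a h).1 hab.symm

theorem Fin.forall_lt_succ_iff {m : ℕ} {P : Fin (m + 1) → Fin (m + 1) → Prop} :
    (∀ i j, i < j → P i j) ↔
      (∀ j : Fin m, P 0 j.succ) ∧ ∀ i j : Fin m, i < j → P i.succ j.succ := by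
  refine ⟨fun h => ⟨fun j => h 0 j.succ j.succ_pos,
    fun i j hij => h _ _ (Fin.succ_lt_succ_iff.2 hij)⟩, fun ⟨h0, h⟩ i j hij => ?_⟩
  induction j using Fin.cases with
  | zero => exact absurd hij (Fin.not_lt_zero i)
  | succ j =>
    induction i using Fin.cases with
    | zero => exact h0 j
    | succ i => exact h i j (Fin.succ_lt_succ_iff.1 hij)

theorem Fin.val_succAbove_eq_add_one_iff {q : ℕ} {v : Fin (q + 1)} {a : Fin q} :
    (v.succAbove a : ℕ) = v + 1 ↔ (a : ℕ) = v := by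
  unfold Fin.succAbove
  split_ifs with h <;> simp only [Fin.lt_def, Fin.val_castSucc, Fin.val_succ] at h ⊢ <;> omega

theorem Fin.val_succAbove_eq_val_succAbove_add_one_iff {q : ℕ} {v : Fin (q + 1)} {a b : Fin q} :
    (v.succAbove b : ℕ) = v.succAbove a + 1 ↔ (b : ℕ) = a + 1 ∧ (b : ℕ) ≠ v := by
  unfold Fin.succAbove
  split_ifs with ha hb hb <;> simp only [Fin.lt_def, Fin.val_castSucc, Fin.val_succ] at ha hb ⊢ <;>
    omega

theorem succFree_cons_succAbove_iff {m q : ℕ} {v : Fin (q + 1)} {w : Fin m → Fin q} :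
    SuccFree (Fin.cons v (v.succAbove ∘ w) : Fin (m + 1) → Fin (q + 1)) ↔
      SuccFree w ∧ ∀ j, (w j : ℕ) ≠ v := by
  simp only [SuccFree, Fin.forall_lt_succ_iff, Fin.cons_zero, Fin.cons_succ, Function.comp_apply,
    ne_eq, Fin.succAbove_right_inj, Fin.val_succAbove_eq_add_one_iff,
    Fin.val_succAbove_eq_val_succAbove_add_one_iff, Fin.ne_succAbove, not_false_eq_true, true_and]
  grind

theorem card_filter_forall_val_ne {m q : ℕ} {w : Fin m → Fin q} (hw : Function.Injective w) :
    #{v : Fin (q + 1) | ∀ j, (w j : ℕ) ≠ v} = q + 1 - m := by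
  have hcompl : ({v : Fin (q + 1) | ∀ j, (w j : ℕ) ≠ v} : Finset _) =
      (univ.image (Fin.castSucc ∘ w))ᶜ := by
    ext v
    simp [Fin.ext_iff]
  rw [hcompl, card_compl, card_image_of_injective _ (Fin.castSucc_injective q |>.comp hw),
    card_univ, Fintype.card_fin, Fintype.card_fin]

theorem card_succFree_succ_succ (m q : ℕ) :
    #{z : Fin (m + 1) → Fin (q + 1) | SuccFree z} =
      (q + 1 - m) * #{w : Fin m → Fin q | SuccFree w} := by
  calc #{z : Fin (m + 1) → Fin (q + 1) | SuccFree z}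
      = #(({w : Fin m → Fin q | SuccFree w} : Finset _).sigma
          fun w => ({v : Fin (q + 1) | ∀ j, (w j : ℕ) ≠ v} : Finset _)) := by
        symm
        refine card_bij (fun x _ => Fin.cons x.2 (x.2.succAbove ∘ x.1)) ?_ ?_ ?_
        · rintro ⟨w, v⟩ h
          simp only [mem_sigma, mem_filter, mem_univ, true_and] at h
          simpa using succFree_cons_succAbove_iff.2 h
        · rintro ⟨w, v⟩ - ⟨w', v'⟩ - h
          obtain ⟨rfl, h⟩ := Fin.cons_inj.1 h
          obtain rfl : w = w' := funext fun j => v.succAbove_right_injective (congrFun h j)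
          rfl
        · intro z hz
          simp only [mem_filter, mem_univ, true_and] at hz
          choose w hw using fun j : Fin m =>
            Fin.exists_succAbove_eq (hz 0 j.succ j.succ_pos).1.symm
          have hz_eq : Fin.cons (z 0) ((z 0).succAbove ∘ w) = z := by
            conv_rhs => rw [← Fin.cons_self_tail z]
            exact congrArg _ (funext hw)
          rw [← hz_eq, succFree_cons_succAbove_iff] at hz
          exact ⟨⟨w, z 0⟩, by simpa using hz, hz_eq⟩
    _ = ∑ w ∈ {w : Fin m → Fin q | SuccFree w}, (q + 1 - m) := by
        rw [card_sigma]
        exact sum_congr rfl fun w hw => card_filter_forall_val_ne (mem_filter.1 hw).2.injective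
    _ = (q + 1 - m) * #{w : Fin m → Fin q | SuccFree w} := by
        rw [sum_const, smul_eq_mul, mul_comm]

theorem card_succFree (m q : ℕ) : #{z : Fin m → Fin q | SuccFree z} = (q + 1 - m) ^ m := by
  induction m generalizing q with
  | zero => simp [SuccFree]
  | succ m ih =>
    cases q with
    | zero => simp
    | succ q => rw [card_succFree_succ_succ, ih, ← pow_succ', Nat.add_sub_add_right]

theorem ZMod.natCast_inj_of_lt {p a b : ℕ} (ha : a < p) (hb : b < p) :
    (a : ZMod p) = b ↔ a = b :=
  ⟨fun h => by
    simpa [ZMod.val_natCast_of_lt ha, ZMod.val_natCast_of_lt hb] using congrArg ZMod.val h,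
    congrArg _⟩

section ShiftMul

variable {p : ℕ} [Fact p.Prime] {k : ZMod p}

def shiftMul (k : ZMod p) (a : Fin (p - 2)) : ZMod p := k * (((a : ℕ) + 2 : ℕ) : ZMod p)

theorem shiftMul_injective (hk : k ≠ 0) : Function.Injective (shiftMul k) := by
  intro a b h
  have h := (ZMod.natCast_inj_of_lt (by omega) (by omega)).1 (mul_left_cancel₀ hk h)
  exact Fin.ext (by omega)

theorem exists_shiftMul_eq_iff (hk : k ≠ 0) {x : ZMod p} :
    (∃ a, shiftMul k a = x) ↔ x ≠ 0 ∧ x ≠ k := by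
  have hp : p.Prime := Fact.out
  constructor
  · rintro ⟨a, rfl⟩
    have h0 : (((a : ℕ) + 2 : ℕ) : ZMod p) ≠ 0 := by
      rw [← Nat.cast_zero, Ne, ZMod.natCast_inj_of_lt (by omega) hp.pos]
      omega
    have h1 : (((a : ℕ) + 2 : ℕ) : ZMod p) ≠ 1 := by
      rw [← Nat.cast_one, Ne, ZMod.natCast_inj_of_lt (by omega) hp.one_lt]
      omega
    exact ⟨mul_ne_zero hk h0, fun h => h1 ((mul_eq_left₀ hk).1 h)⟩
  · rintro ⟨hx0, hxk⟩
    set y := k⁻¹ * x with hy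
    have hy0 : y.val ≠ 0 := by simp [hy, hx0, hk]
    have hy1 : y.val ≠ 1 := by
      rw [Ne, ZMod.val_eq_one hp.one_lt, hy, inv_mul_eq_one₀ hk]
      exact hxk.symm
    refine ⟨⟨y.val - 2, by have := y.val_lt; omega⟩, ?_⟩
    rw [shiftMul, Nat.sub_add_cancel (by omega), ZMod.natCast_zmod_val, hy,
      mul_inv_cancel_left₀ hk]

theorem shiftMul_sub_shiftMul_eq_iff (hk : k ≠ 0) {a b : Fin (p - 2)} :
    shiftMul k b - shiftMul k a = k ↔ (b : ℕ) = a + 1 := by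
  have hdiff : shiftMul k b - shiftMul k a = k * ((b : ℕ) - (a : ℕ)) := by
    simp only [shiftMul]; push_cast; ring
  rw [hdiff, mul_eq_left₀ hk, sub_eq_iff_eq_add, add_comm, ← Nat.cast_succ,
    ZMod.natCast_inj_of_lt (by omega) (by omega)]

theorem card_filter_eq_card_succFree [NeZero p] (hk : k ≠ 0) (m : ℕ) :
    (Finset.univ.filter (fun x : Fin m → ZMod p =>
      (∀ i, x i ≠ 0) ∧ (∀ i, x i ≠ k) ∧
      (∀ i1 i2 : Fin m, i1 < i2 → x i1 ≠ x i2) ∧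
      (∀ i1 i2 : Fin m, i1 ≤ i2 → x i2 - x i1 ≠ k))).card =
      #{z : Fin m → Fin (p - 2) | SuccFree z} := by
  rw [← card_image_of_injective _ (shiftMul_injective hk).comp_left]
  congr 1
  ext x
  simp only [mem_filter, mem_univ, true_and, mem_image]
  constructor
  · rintro ⟨hx0, hxk, hxinj, hxsub⟩
    choose z hz using fun i => (exists_shiftMul_eq_iff hk).2 ⟨hx0 i, hxk i⟩
    obtain rfl : shiftMul k ∘ z = x := funext hz
    refine ⟨z, fun i j hij => ⟨fun h => hxinj i j hij (congrArg (shiftMul k) h), fun h => ?_⟩, rfl⟩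
    exact hxsub i j hij.le ((shiftMul_sub_shiftMul_eq_iff hk).2 h)
  · rintro ⟨z, hz, rfl⟩
    refine ⟨fun i => ((exists_shiftMul_eq_iff hk).1 ⟨z i, rfl⟩).1,
      fun i => ((exists_shiftMul_eq_iff hk).1 ⟨z i, rfl⟩).2,
      fun i j hij => (shiftMul_injective hk).ne (hz i j hij).1, fun i j hij => ?_⟩
    rcases hij.eq_or_lt with rfl | hij
    · simpa using hk.symm
    · exact fun h => (hz i j hij).2 ((shiftMul_sub_shiftMul_eq_iff hk).1 h)

end ShiftMul

theorem stmt_0_general (p n : ℕ) (hp : p.Prime) [NeZero p] (hn : 2 ≤ n)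
    (k : ZMod p) (hk : k ≠ 0) :
    (Finset.univ.filter (fun x : Fin (n - 1) → ZMod p =>
      (∀ i, x i ≠ 0) ∧ (∀ i, x i ≠ k) ∧
      (∀ i1 i2 : Fin (n - 1), i1 < i2 → x i1 ≠ x i2) ∧
      (∀ i1 i2 : Fin (n - 1), i1 ≤ i2 → x i2 - x i1 ≠ k))).card
      = (p - n) ^ (n - 1) := by
  have := Fact.mk hp
  rw [card_filter_eq_card_succFree hk, card_succFree]
  have := hp.two_le
  congr 1
  omega

theorem stmt_0 (p n : ℕ) (hp : p.Prime) [NeZero p] (hn : 2 ≤ n) (hpn : n < p)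
    (k : ZMod p) (hk : k ≠ 0) :
    (Finset.univ.filter (fun x : Fin (n - 1) → ZMod p =>
      (∀ i, x i ≠ 0) ∧ (∀ i, x i ≠ k) ∧
      (∀ i1 i2 : Fin (n - 1), i1 < i2 → x i1 ≠ x i2) ∧
      (∀ i1 i2 : Fin (n - 1), i1 ≤ i2 → x i2 - x i1 ≠ k))).card
      = (p - n) ^ (n - 1) :=
  stmt_0_general p n hp hn k hk
end

section
/- Let p be a prime and n ≥ 2 with p > n. The number of vectors (x_1,...,x_n) ∈ F_p^n such that x_i ≠ 0 for all i, x_{i_1} ≠ x_{i_2} for all i_1 < i_2, and x_n - x_{i_2} + x_{i_1} ≠ 0 for all 1 ≤ i_1 ≤ i_2 < n, equals (p-1)(p-n)^{n-1}. -/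
/-!
Dividing by `x_n ≠ 0` normalizes the last coordinate to `1`: the admissible vectors are exactly
`(t • a, t)` with `t ≠ 0` and `a ∈ 𝔽_pⁿ⁻¹` injective, avoiding `0` and `1`, and with
`a_j ≠ a_i + 1` whenever `i < j`. Writing `a_j = v_j + 2` turns `a` into a sequence `v` of
`m = n - 1` distinct integers in `[0, N)`, `N = p - 2`, in which no value is followed later by its
successor.

Such a `v` is compressed to `b_j = v_j - #{i | v_i < v_j} ∈ [0, N - m]`. Compression collapses
each maximal run of consecutive values of `v` to a single value of `b`, and the condition on `v`
says precisely that inside a run the indices decrease. So `v` is recovered from an arbitrary `b` by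
ranking its entries lexicographically by (value, decreasing index) and adding the rank back, and
there are `(N + 1 - m) ^ m` such `v`.
-/

open Finset Function

abbrev NoLaterSucc {ι α : Type*} [LT ι] [Add α] [One α] (a : ι → α) : Prop :=
  ∀ i j, i < j → a j ≠ a i + 1

section Rank

variable {ι α β : Type*} [Fintype ι] [LinearOrder α]

def rank (f : ι → α) (j : ι) : ℕ := #{i | f i < f j}

theorem rank_lt_rank_iff {f : ι → α} {i j : ι} : rank f i < rank f j ↔ f i < f j := by
  refine ⟨fun h => not_le.mp fun hji => h.not_ge ?_,
    fun h => card_lt_card ⟨?_, fun hsub => ?_⟩⟩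
  · exact card_le_card (monotone_filter_right _ fun k _ hk => hk.trans_le hji)
  · exact monotone_filter_right _ fun k _ hk => hk.trans h
  · exact lt_irrefl _ (mem_filter.mp (hsub (by simpa using h))).2

theorem rank_lt_card (f : ι → α) (j : ι) : rank f j < Fintype.card ι :=
  card_lt_card (filter_ssubset.mpr ⟨j, mem_univ j, lt_irrefl _⟩)

theorem rank_congr [LinearOrder β] {f : ι → α} {g : ι → β}
    (h : ∀ i j, f i < f j ↔ g i < g j) : rank f = rank g :=
  funext fun j => by simp only [rank, h]

end Rank

section TransferOrder

variable {ι α β : Type*} [LinearOrder α] [Preorder β] {f : ι → α} {g : ι → β}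

theorem lt_iff_lt_of_forall_lt_imp (hf : Injective f) (h : ∀ i j, f i < f j → g i < g j)
    {i j : ι} : g i < g j ↔ f i < f j := by
  refine ⟨fun hg => ?_, h i j⟩
  rcases lt_trichotomy (f i) (f j) with hlt | heq | hgt
  · exact hlt
  · exact absurd hg (hf heq ▸ lt_irrefl _)
  · exact absurd (h j i hgt) hg.not_gt

theorem injective_of_forall_lt_imp (hf : Injective f) (h : ∀ i j, f i < f j → g i < g j) :
    Injective g := by
  intro i j hij
  by_contra hne
  rcases lt_or_gt_of_ne (hf.ne hne) with hlt | hgt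
  · exact (h i j hlt).ne hij
  · exact (h j i hgt).ne' hij

end TransferOrder

section LexKey

variable {ι α : Type*} {b : ι → α}

def lexKey (b : ι → α) (i : ι) : α ×ₗ ιᵒᵈ := toLex (b i, OrderDual.toDual i)

theorem lexKey_lt_lexKey_iff [LT ι] [LT α] {i j : ι} :
    lexKey b i < lexKey b j ↔ b i < b j ∨ b i = b j ∧ j < i := by
  simp [lexKey, Prod.Lex.toLex_lt_toLex]

theorem lexKey_injective (b : ι → α) : Injective (lexKey b) := fun _ _ h =>
  OrderDual.toDual.injective (congrArg (fun x => (ofLex x).2) h)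

end LexKey

section NatValued

variable {ι : Type*} [Fintype ι] {a b : ι → ℕ} {N : ℕ}

theorem card_filter_mem_Ico_le (ha : Injective a) (lo hi : ℕ) :
    #{i | a i ∈ Ico lo hi} ≤ hi - lo := by
  refine (card_le_card_of_injOn a (t := Ico lo hi) (fun i hi => ?_) ha.injOn).trans (by simp)
  simp only [coe_filter, mem_univ, true_and, Set.mem_ofPred_eq, mem_coe] at hi ⊢
  exact hi

theorem Ico_subset_image_of_card_filter_mem_Ico (ha : Injective a) {lo hi : ℕ}
    (h : #{i | a i ∈ Ico lo hi} = hi - lo) : Ico lo hi ⊆ univ.image a := by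
  have himage : ({i | a i ∈ Ico lo hi} : Finset ι).image a = Ico lo hi :=
    eq_of_subset_of_card_le
      (fun v hv => by obtain ⟨i, hi, rfl⟩ := mem_image.mp hv; exact (mem_filter.mp hi).2)
      (by rw [card_image_of_injective _ ha, h, Nat.card_Ico])
  exact himage ▸ image_subset_image (subset_univ _)

theorem rank_le_self (ha : Injective a) (j : ι) : rank a j ≤ a j := by
  simpa [rank] using card_filter_mem_Ico_le ha 0 (a j)

theorem rank_add_card_filter_mem_Ico {i j : ι} (h : a i ≤ a j) :
    rank a i + #{k | a k ∈ Ico (a i) (a j)} = rank a j := by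
  rw [rank, rank, ← card_filter_add_card_filter_not (s := {k | a k < a j}) (fun k => a k < a i)]
  congr 2 <;> ext k <;> simp only [mem_filter, mem_univ, true_and, mem_Ico] <;> omega

def compress (a : ι → ℕ) (j : ι) : ℕ := a j - rank a j

theorem compress_add_eq_compress (ha : Injective a) {i j : ι} (h : a i ≤ a j) :
    compress a i + (a j - a i - #{k | a k ∈ Ico (a i) (a j)}) = compress a j := by
  have := rank_add_card_filter_mem_Ico h
  have := card_filter_mem_Ico_le ha (a i) (a j)
  have := rank_le_self ha i
  have := rank_le_self ha j
  unfold compress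
  omega

theorem compress_le_compress (ha : Injective a) {i j : ι} (h : a i ≤ a j) :
    compress a i ≤ compress a j :=
  compress_add_eq_compress ha h ▸ Nat.le_add_right _ _

theorem compress_lt (ha : Injective a) (hN : ∀ j, a j < N) (j : ι) :
    compress a j < N + 1 - Fintype.card ι := by
  classical
  have : Nonempty ι := ⟨j⟩
  obtain ⟨w, hw⟩ := Finite.exists_max a
  have hbelow : ({i | a i < a w} : Finset ι) = univ.erase w := by
    ext i
    simpa using ⟨fun h hiw => h.ne (congrArg a hiw), fun hiw => (hw i).lt_of_ne (ha.ne hiw)⟩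
  have hrank : rank a w = Fintype.card ι - 1 := by
    rw [rank, hbelow, card_erase_of_mem (mem_univ w), card_univ]
  have := compress_le_compress ha (hw j)
  have := rank_le_self ha w
  have := hN w
  have := Fintype.card_pos (α := ι)
  unfold compress at *
  omega

variable [LinearOrder ι]

theorem le_of_Ico_subset_image (ha : Injective a) (hs : NoLaterSucc a) {k w : ι}
    (hkw : a k ≤ a w) (hI : Ico (a k) (a w) ⊆ univ.image a) : w ≤ k := by
  obtain ⟨d, hd⟩ := Nat.exists_eq_add_of_le hkw
  induction d generalizing w with
  | zero => exact (ha hd).le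
  | succ d ih =>
    have hmem : a k + d ∈ Ico (a k) (a w) := mem_Ico.mpr ⟨le_self_add, by omega⟩
    obtain ⟨u, -, hu⟩ := mem_image.mp (hI hmem)
    have huk : u ≤ k := ih (w := u) (by omega) ((Ico_subset_Ico_right (by omega)).trans hI) hu
    exact (not_lt.mp fun huw => hs u w huw (by omega)).trans huk

theorem lexKey_compress_lt_of_lt (ha : Injective a) (hs : NoLaterSucc a) {i j : ι}
    (h : a i < a j) : lexKey (compress a) i < lexKey (compress a) j := by
  rw [lexKey_lt_lexKey_iff]
  rcases (compress_le_compress ha h.le).lt_or_eq with hlt | heq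
  · exact Or.inl hlt
  · have hfull : #{k | a k ∈ Ico (a i) (a j)} = a j - a i := by
      have := compress_add_eq_compress ha h.le
      have := card_filter_mem_Ico_le ha (a i) (a j)
      omega
    have hji :=
      le_of_Ico_subset_image ha hs h.le (Ico_subset_image_of_card_filter_mem_Ico ha hfull)
    exact Or.inr ⟨heq, hji.lt_of_ne fun hji => h.ne (congrArg a hji.symm)⟩

theorem rank_lexKey_compress (ha : Injective a) (hs : NoLaterSucc a) :
    rank (lexKey (compress a)) = rank a :=
  rank_congr fun _ _ => lt_iff_lt_of_forall_lt_imp ha fun _ _ => lexKey_compress_lt_of_lt ha hs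

def spread (b : ι → ℕ) (j : ι) : ℕ := b j + rank (lexKey b) j

theorem spread_lt_spread_iff {i j : ι} : spread b i < spread b j ↔ lexKey b i < lexKey b j :=
  lt_iff_lt_of_forall_lt_imp (lexKey_injective b) fun i j h => by
    have hr := rank_lt_rank_iff.mpr h
    rw [lexKey_lt_lexKey_iff] at h
    unfold spread
    omega

theorem compress_spread (b : ι → ℕ) : compress (spread b) = b := by
  have hrank : rank (spread b) = rank (lexKey b) := rank_congr fun _ _ => spread_lt_spread_iff
  funext j
  simp [compress, hrank, spread]

theorem spread_compress (ha : Injective a) (hs : NoLaterSucc a) : spread (compress a) = a := by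
  funext j
  have := rank_le_self ha j
  simp only [spread, rank_lexKey_compress ha hs, compress]
  omega

theorem spread_injective (b : ι → ℕ) : Injective (spread b) :=
  injective_of_forall_lt_imp (lexKey_injective b) fun _ _ => spread_lt_spread_iff.mpr

theorem noLaterSucc_spread (b : ι → ℕ) : NoLaterSucc (spread b) := by
  intro i j hij h
  have hlt := spread_lt_spread_iff.mp (show spread b i < spread b j by omega)
  have hr := rank_lt_rank_iff.mpr hlt
  have hb : b i < b j := (lexKey_lt_lexKey_iff.mp hlt).resolve_right fun h' => h'.2.not_gt hij
  unfold spread at h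
  omega

theorem spread_lt (hb : ∀ j, b j < N + 1 - Fintype.card ι) (j : ι) : spread b j < N := by
  have := rank_lt_card (lexKey b) j
  have := hb j
  unfold spread
  omega

theorem card_filter_injective_noLaterSucc (N : ℕ) :
    #{a ∈ Fintype.piFinset fun _ : ι => range N | Injective a ∧ NoLaterSucc a}
      = (N + 1 - Fintype.card ι) ^ Fintype.card ι := by
  have hcodomain : #(Fintype.piFinset fun _ : ι => range (N + 1 - Fintype.card ι))
      = (N + 1 - Fintype.card ι) ^ Fintype.card ι := by
    simp [Fintype.card_piFinset]
  rw [← hcodomain]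
  refine card_nbij' compress spread (fun a ha => ?_) (fun b hb => ?_) (fun a ha => ?_)
    (fun b _ => compress_spread b)
  · simp only [coe_filter, Fintype.mem_piFinset, mem_range, Set.mem_ofPred_eq, mem_coe] at ha ⊢
    exact compress_lt ha.2.1 ha.1
  · simp only [coe_filter, Fintype.mem_piFinset, mem_range, Set.mem_ofPred_eq, mem_coe] at hb ⊢
    exact ⟨spread_lt hb, spread_injective b, noLaterSucc_spread b⟩
  · simp only [coe_filter, Set.mem_ofPred_eq] at ha
    exact spread_compress ha.2.1 ha.2.2

end NatValued

abbrev Normalized {ι F : Type*} [LT ι] [Zero F] [One F] [Add F] (a : ι → F) : Prop :=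
  (∀ j, a j ≠ 0 ∧ a j ≠ 1) ∧ Injective a ∧ NoLaterSucc a

abbrev Admissible {F : Type*} [Zero F] [Sub F] [Add F] {m : ℕ} (x : Fin (m + 1) → F) : Prop :=
  (∀ i, x i ≠ 0) ∧ Injective x ∧
    ∀ i j : Fin m, i ≤ j → x (Fin.last m) - x j.castSucc + x i.castSucc ≠ 0

section ZModShift

variable {p : ℕ}

theorem natCast_add_two_eq_add_one_iff {v w : ℕ} (hv : v + 2 < p) (hw : w + 2 < p) :
    ((w + 2 : ℕ) : ZMod p) = ((v + 2 : ℕ) : ZMod p) + 1 ↔ w = v + 1 := by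
  rw [show ((v + 2 : ℕ) : ZMod p) + 1 = ((v + 3 : ℕ) : ZMod p) by push_cast; ring,
    ZMod.natCast_eq_natCast_iff', Nat.mod_eq_of_lt hw]
  rcases (show v + 3 < p ∨ v + 3 = p by omega) with h | h
  · rw [Nat.mod_eq_of_lt h]
    omega
  · rw [h, Nat.mod_self]
    omega

variable [NeZero p]

theorem two_le_val_of_ne_zero_of_ne_one {x : ZMod p} (h0 : x ≠ 0) (h1 : x ≠ 1) :
    2 ≤ x.val := by
  have : x.val ≠ 0 := fun h => h0 ((ZMod.val_eq_zero x).mp h)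
  have : x.val ≠ 1 := fun h => h1 (by rw [← ZMod.natCast_zmod_val x, h, Nat.cast_one])
  omega

theorem card_filter_normalized_zmod (ι : Type*) [Fintype ι] [LinearOrder ι] :
    #{a : ι → ZMod p | Normalized a}
      = #{b ∈ Fintype.piFinset fun _ : ι => range (p - 2) | Injective b ∧ NoLaterSucc b} := by
  refine card_nbij' (fun a j => (a j).val - 2) (fun b j => ((b j + 2 : ℕ) : ZMod p))
    (fun a ha => ?_) (fun b hb => ?_) (fun a ha => ?_) (fun b hb => ?_)
  · simp only [coe_filter, mem_univ, true_and, Set.mem_ofPred_eq, Fintype.mem_piFinset,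
      mem_range] at ha ⊢
    obtain ⟨hne, hinj, hs⟩ := ha
    have h2 j := two_le_val_of_ne_zero_of_ne_one (hne j).1 (hne j).2
    refine ⟨fun j => by have := (a j).val_lt; have := h2 j; omega, fun i j hij => ?_,
      fun i j hij h => ?_⟩
    · dsimp only at hij
      exact hinj (ZMod.val_injective p (by have := h2 i; have := h2 j; omega))
    · dsimp only at h
      apply hs i j hij
      rw [← ZMod.natCast_zmod_val (a j), show (a j).val = (a i).val + 1 by
        have := h2 i; have := h2 j; omega, Nat.cast_succ, ZMod.natCast_zmod_val]
  · simp only [coe_filter, mem_univ, true_and, Set.mem_ofPred_eq, Fintype.mem_piFinset,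
      mem_range] at hb ⊢
    obtain ⟨hlt, hinj, hs⟩ := hb
    have hval j : ((b j + 2 : ℕ) : ZMod p).val = b j + 2 :=
      ZMod.val_natCast_of_lt (by have := hlt j; omega)
    refine ⟨fun j => ⟨fun h => ?_, fun h => ?_⟩, fun i j hij => hinj ?_,
      fun i j hij h => ?_⟩
    · simpa [h] using hval j
    · dsimp only at h
      have := hval j
      rw [h, ← Nat.cast_one, ZMod.val_natCast_of_lt (by have := hlt j; omega)] at this
      omega
    · have := congrArg ZMod.val hij
      simp only [hval] at this
      omega
    · dsimp only at h
      exact hs i j hij ((natCast_add_two_eq_add_one_iff (by have := hlt i; omega)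
        (by have := hlt j; omega)).mp h)
  · simp only [coe_filter, mem_univ, true_and, Set.mem_ofPred_eq] at ha
    funext j
    simp only
    rw [Nat.sub_add_cancel (two_le_val_of_ne_zero_of_ne_one (ha.1 j).1 (ha.1 j).2),
      ZMod.natCast_zmod_val]
  · simp only [coe_filter, Fintype.mem_piFinset, mem_range, Set.mem_ofPred_eq] at hb
    funext j
    simp only
    rw [ZMod.val_natCast_of_lt (by have := hb.1 j; omega)]
    omega

end ZModShift

section Scaling

variable {F : Type*} [Field F] {m : ℕ}

theorem admissible_snoc_smul_iff {t : F} (ht : t ≠ 0) {a : Fin m → F} :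
    Admissible (Fin.snoc (t • a) t : Fin (m + 1) → F) ↔ Normalized a := by
  simp only [Admissible, Normalized, Fin.forall_fin_succ', Fin.snoc_castSucc, Fin.snoc_last,
    Fin.snoc_injective_iff, Pi.smul_apply, smul_eq_mul]
  have hinj : Injective (t • a) ↔ Injective a := (mul_right_injective₀ ht).of_comp_iff a
  have hrange : t ∉ Set.range (t • a) ↔ ∀ j, a j ≠ 1 := by
    simp [mul_eq_left₀ ht]
  have hsucc : (∀ i j : Fin m, i ≤ j → t - t * a j + t * a i ≠ 0) ↔ NoLaterSucc a := by
    have hfactor i j : t - t * a j + t * a i = t * (a i + 1 - a j) := by ring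
    simp only [hfactor, mul_ne_zero_iff, ne_eq, ht, not_false_eq_true, true_and, sub_eq_zero,
      eq_comm (b := a _)]
    refine ⟨fun h i j hij => h i j hij.le, fun h i j hij => ?_⟩
    rcases hij.eq_or_lt with rfl | hlt
    · simp
    · exact h i j hlt
  simp only [mul_ne_zero_iff, ht, ne_eq, not_false_eq_true, and_true, hinj, hrange, hsucc,
    forall_and]
  tauto

theorem card_filter_admissible [Fintype F] [DecidableEq F] (m : ℕ) :
    #{x : Fin (m + 1) → F | Admissible x}
      = (Fintype.card F - 1) * #{a : Fin m → F | Normalized a} := by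
  have hunits : #{t : F | t ≠ 0} = Fintype.card F - 1 := by
    rw [filter_ne', card_erase_of_mem (mem_univ _), card_univ]
  rw [← hunits, ← card_product]
  refine card_nbij' (fun x => (x (Fin.last m), (x (Fin.last m))⁻¹ • Fin.init x))
    (fun ta => Fin.snoc (ta.1 • ta.2) ta.1) (fun x hx => ?_) (fun ta hta => ?_)
    (fun x hx => ?_) (fun ta hta => ?_)
  · simp only [coe_filter, mem_univ, true_and, Set.mem_ofPred_eq, coe_product,
      Set.mem_prod] at hx ⊢
    have ht : x (Fin.last m) ≠ 0 := hx.1 _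
    refine ⟨ht, (admissible_snoc_smul_iff ht).mp ?_⟩
    rwa [smul_inv_smul₀ ht, Fin.snoc_init_self]
  · simp only [coe_filter, mem_univ, true_and, Set.mem_ofPred_eq, coe_product,
      Set.mem_prod] at hta ⊢
    exact (admissible_snoc_smul_iff hta.1).mpr hta.2
  · simp only [coe_filter, mem_univ, true_and, Set.mem_ofPred_eq] at hx
    simp only
    rw [smul_inv_smul₀ (hx.1 _), Fin.snoc_init_self]
  · simp only [coe_product, coe_filter, mem_univ, true_and, Set.mem_prod, Set.mem_ofPred_eq] at hta
    simp [Fin.init_snoc, inv_smul_smul₀ hta.1]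

end Scaling

theorem Fin.forall_le_of_val_lt_iff_forall_castSucc {m : ℕ}
    {P : Fin (m + 1) → Fin (m + 1) → Prop} :
    (∀ i j : Fin (m + 1), i ≤ j → (j : ℕ) < m → P i j) ↔
      ∀ i j : Fin m, i ≤ j → P i.castSucc j.castSucc := by
  refine ⟨fun h i j hij => h _ _ (Fin.castSucc_le_castSucc_iff.mpr hij) j.is_lt,
    fun h i j hij hj => ?_⟩
  exact h ⟨i, by omega⟩ ⟨j, hj⟩ hij

theorem stmt_1 (p n : ℕ) (hp : p.Prime) [NeZero p] (hn : 2 ≤ n) (hpn : n < p) :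
    (Finset.univ.filter (fun x : Fin n → ZMod p =>
      (∀ i, x i ≠ 0) ∧
      (∀ i1 i2 : Fin n, i1 < i2 → x i1 ≠ x i2) ∧
      (∀ i1 i2 : Fin n, i1 ≤ i2 → (i2 : ℕ) < n - 1 →
        x ⟨n - 1, by omega⟩ - x i2 + x i1 ≠ 0))).card
      = (p - 1) * (p - n) ^ (n - 1) := by
  have : Fact p.Prime := ⟨hp⟩
  obtain ⟨m, rfl⟩ : ∃ m, n = m + 1 := ⟨n - 1, by omega⟩
  calc _ = #{x : Fin (m + 1) → ZMod p | Admissible x} := by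
        refine congrArg card (filter_congr fun x _ => ?_)
        have hlast (h : m < m + 1) : (⟨m, h⟩ : Fin (m + 1)) = Fin.last m := rfl
        simp only [Admissible, injective_iff_pairwise_ne.trans pairwise_iff_lt, onFun,
          add_tsub_cancel_right, hlast, Fin.forall_le_of_val_lt_iff_forall_castSucc]
    _ = (p - 1) * #{a : Fin m → ZMod p | Normalized a} := by
        rw [card_filter_admissible, ZMod.card]
    _ = (p - 1) * (p - (m + 1)) ^ m := by
        have hcount := (card_filter_normalized_zmod (p := p) (Fin m)).trans
          (card_filter_injective_noLaterSucc (p - 2))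
        rw [Fintype.card_fin, show p - 2 + 1 - m = p - (m + 1) by omega] at hcount
        rw [← hcount]
        -- the two filters differ only in how their decidability instances were synthesized
        congr!
end

section
/- Let p be an odd prime, n ≥ 2 with p > 2n - 1, and let k ∈ F_p, k ≠ 0. The number of vectors (x_1,...,x_{n-1}) ∈ F_p^{n-1} such that x_i ≠ 0 for all i, x_i ≠ k for all i, x_{i_1} ≠ x_{i_2} for all i_1 < i_2, x_{i_1} + x_{i_2} ≠ k for all i_1 < i_2, and additionally x_i ≠ k/2 for all i, equals (p-3)(p-5)(p-7)···(p-(2n-1)). -/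
/-!
The conditions say that `x` is an injective tuple with entries in `T = 𝔽_p \ {0, k, k/2}`, no two
of which sum to `k`. The involution `a ↦ k - a` has no fixed point on `T`, so `T` splits into
`(p - 3) / 2` pairs `{a, k - a}`, and choosing the entries one at a time, each choice uses up a
whole pair: the `j`-th entry has `#T - 2j = p - 3 - 2j` possible values.
-/

open Finset

section SumAvoiding

variable {α : Type*} [AddCommGroup α]

lemma pairwise_add_ne_iff_lt {ι : Type*} [LinearOrder ι] (x : ι → α) (k : α) :
    (Pairwise fun i j => x i + x j ≠ k) ↔ ∀ i j, i < j → x i + x j ≠ k :=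
  haveI : Std.Symm fun i j => x i + x j ≠ k := ⟨fun _ _ h => by rwa [add_comm]⟩
  pairwise_iff_lt

variable [DecidableEq α]

open scoped Classical in
noncomputable def sumAvoidingTuples (T : Finset α) (k : α) (m : ℕ) : Finset (Fin m → α) :=
  {x ∈ Fintype.piFinset fun _ => T |
    Function.Injective x ∧ Pairwise fun i j => x i + x j ≠ k}

lemma cons_mem_sumAvoidingTuples {T : Finset α} {k a : α} {m : ℕ} {y : Fin m → α} :
    (Fin.cons a y : Fin (m + 1) → α) ∈ sumAvoidingTuples T k (m + 1) ↔
      a ∈ T ∧ y ∈ sumAvoidingTuples ((T.erase a).erase (k - a)) k m := by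
  simp only [sumAvoidingTuples, mem_filter, Fintype.mem_piFinset, Fin.forall_fin_succ,
    Fin.cons_zero, Fin.cons_succ, Fin.cons_injective_iff, pairwise_fin_succ_iff, mem_erase,
    Set.mem_range, not_exists, ne_eq, eq_sub_iff_add_eq', add_comm (y _) a, forall_and]
  tauto

lemma card_sumAvoidingTuples_succ (T : Finset α) (k : α) (m : ℕ) :
    #(sumAvoidingTuples T k (m + 1)) =
      ∑ a ∈ T, #(sumAvoidingTuples ((T.erase a).erase (k - a)) k m) := by
  rw [← card_sigma]
  refine card_equiv ((Fin.consEquiv _).symm.trans (Equiv.sigmaEquivProd _ _).symm) fun x => ?_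
  induction x using Fin.consCases with
  | cons a y => simp [cons_mem_sumAvoidingTuples, Fin.consEquiv]

variable {T : Finset α} {k : α}

lemma card_erase_erase_sub (hinv : ∀ a ∈ T, k - a ∈ T) (hfree : ∀ a ∈ T, a + a ≠ k) {a : α}
    (ha : a ∈ T) : #((T.erase a).erase (k - a)) = #T - 2 := by
  have hka : k - a ∈ T.erase a :=
    mem_erase.2 ⟨fun h => hfree a ha (sub_eq_iff_eq_add.1 h).symm, hinv a ha⟩
  rw [card_erase_of_mem hka, card_erase_of_mem ha, Nat.sub_sub]

lemma sub_mem_erase_erase_sub (hinv : ∀ b ∈ T, k - b ∈ T) (a : α) :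
    ∀ b ∈ (T.erase a).erase (k - a), k - b ∈ (T.erase a).erase (k - a) := by
  intro b hb
  obtain ⟨hb_ne_sub, hb_ne, hbT⟩ := by simpa only [mem_erase] using hb
  simp only [mem_erase]
  exact ⟨fun h => hb_ne (sub_right_inj.1 h), fun h => hb_ne_sub (sub_eq_iff_comm.1 h).symm,
    hinv b hbT⟩

theorem card_sumAvoidingTuples (hinv : ∀ a ∈ T, k - a ∈ T) (hfree : ∀ a ∈ T, a + a ≠ k)
    (m : ℕ) :
    #(sumAvoidingTuples T k m) = ∏ j ∈ range m, (#T - 2 * j) := by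
  induction m generalizing T with
  | zero => simp [sumAvoidingTuples, Function.injective_of_subsingleton]
  | succ m ih =>
    have hfiber : ∀ a ∈ T, #(sumAvoidingTuples ((T.erase a).erase (k - a)) k m) =
        ∏ j ∈ range m, (#T - 2 - 2 * j) := fun a ha => by
      rw [ih (sub_mem_erase_erase_sub hinv a) (fun b hb => hfree b (mem_of_mem_erase
        (mem_of_mem_erase hb))), card_erase_erase_sub hinv hfree ha]
    rw [card_sumAvoidingTuples_succ, sum_congr rfl hfiber, sum_const, smul_eq_mul,
      prod_range_succ', mul_comm]
    congr 1
    exact prod_congr rfl fun j _ => by omega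

end SumAvoiding

section HalfExcluded

variable {F : Type*} [Field F] [NeZero (2 : F)] [Fintype F] [DecidableEq F] {k : F}

lemma sub_mem_compl_zero_self_half {a : F}
    (ha : a ∈ ({0, k, k / 2} : Finset F)ᶜ) : k - a ∈ ({0, k, k / 2} : Finset F)ᶜ := by
  simp only [mem_compl, mem_insert, mem_singleton, not_or] at ha ⊢
  obtain ⟨ha0, hak, hahalf⟩ := ha
  refine ⟨fun h => hak ?_, fun h => ha0 ?_, fun h => hahalf ?_⟩
  · linear_combination -h
  · linear_combination -h
  · linear_combination -h - add_halves k

lemma add_self_ne_of_mem_compl_zero_self_half {a : F}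
    (ha : a ∈ ({0, k, k / 2} : Finset F)ᶜ) : a + a ≠ k := by
  rintro rfl
  simp at ha

lemma card_compl_zero_self_half (hk : k ≠ 0) :
    #({0, k, k / 2} : Finset F)ᶜ = Fintype.card F - 3 := by
  have hhalf : k / 2 ≠ k := fun h => hk (by linear_combination -2 * h + add_halves k)
  rw [card_compl, card_insert_of_notMem, card_insert_of_notMem, card_singleton]
  · simpa using hhalf.symm
  · simpa [hk.symm] using (div_ne_zero hk two_ne_zero).symm

end HalfExcluded

theorem stmt_3_general (p n : ℕ) [Fact p.Prime] (hodd : Odd p) (k : ZMod p) (hk : k ≠ 0) :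
    (Finset.univ.filter (fun x : Fin (n - 1) → ZMod p =>
      (∀ i, x i ≠ 0) ∧ (∀ i, x i ≠ k) ∧
      (∀ i1 i2 : Fin (n - 1), i1 < i2 → x i1 ≠ x i2) ∧
      (∀ i1 i2 : Fin (n - 1), i1 < i2 → x i1 + x i2 ≠ k) ∧
      (∀ i, x i ≠ k / (2 : ZMod p)))).card
      = ∏ j ∈ Finset.range (n - 1), (p - (2 * j + 3)) := by
  have : NeZero (2 : ZMod p) :=
    ⟨Ring.two_ne_zero <| by rw [ZMod.ringChar_zmod_n]; rintro rfl; exact absurd hodd (by decide)⟩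
  trans #(sumAvoidingTuples ({0, k, k / 2} : Finset (ZMod p))ᶜ k (n - 1))
  · congr 1
    ext x
    simp only [sumAvoidingTuples, mem_filter, mem_univ, true_and, Fintype.mem_piFinset,
      mem_compl, mem_insert, mem_singleton, not_or, forall_and,
      Function.injective_iff_pairwise_ne, Std.Symm.pairwise_on, pairwise_add_ne_iff_lt]
    tauto
  rw [card_sumAvoidingTuples (fun _ => sub_mem_compl_zero_self_half)
    (fun _ => add_self_ne_of_mem_compl_zero_self_half), card_compl_zero_self_half hk, ZMod.card]
  exact prod_congr rfl fun j _ => by omega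

theorem stmt_3 (p n : ℕ) [Fact p.Prime] (hodd : Odd p) (hn : 2 ≤ n)
    (hpn : 2 * n - 1 < p) (k : ZMod p) (hk : k ≠ 0) :
    (Finset.univ.filter (fun x : Fin (n - 1) → ZMod p =>
      (∀ i, x i ≠ 0) ∧ (∀ i, x i ≠ k) ∧
      (∀ i1 i2 : Fin (n - 1), i1 < i2 → x i1 ≠ x i2) ∧
      (∀ i1 i2 : Fin (n - 1), i1 < i2 → x i1 + x i2 ≠ k) ∧
      (∀ i, x i ≠ k / (2 : ZMod p)))).card
      = ∏ j ∈ Finset.range (n - 1), (p - (2 * j + 3)) :=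
  stmt_3_general p n hodd k hk
end

section
/- Let m ≥ 2 and p be a prime with p > 2·3^{m-1}. Then the m(m+1) residues in F_p given by 3^{i-1} for 1 ≤ i ≤ m, p - 3^{i-1} for 1 ≤ i ≤ m, 3^j - 3^i for 0 ≤ i < j ≤ m-1, and p - 3^j + 3^i for 0 ≤ i < j ≤ m-1, are pairwise distinct. -/
/-!
The listed residues are exactly the nonzero differences `x - y` of the set
`T = {0, 1, 3, …, 3^(m-1)}` in `ZMod p`, so it suffices that `T` is a Sidon set there:
`x + y = u + v` forces `{x, y} = {u, v}`. In `ℕ`, if the smallest of the four numbers, say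
`x = 3^i`, were missing on the right, then `3^(i+1)` would divide `u`, `v`, `y` but not `x`
(for `x = 0` one uses instead that `3 ∤ 1 + 3^e`). Since every such sum is at most
`2 * 3^(m-1) < p`, the identity lifts from `ZMod p` to `ℕ`.
-/

open Finset Pointwise

def IsSidon {α : Type*} [Add α] (s : Set α) : Prop :=
  ∀ a ∈ s, ∀ b ∈ s, ∀ c ∈ s, ∀ d ∈ s, a + b = c + d → a = c ∧ b = d ∨ a = d ∧ b = c

namespace IsSidon

variable {α β : Type*}

theorem mono [Add α] {s t : Set α} (hst : s ⊆ t) (ht : IsSidon t) : IsSidon s :=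
  fun a ha b hb c hc d hd => ht a (hst ha) b (hst hb) c (hst hc) d (hst hd)

theorem image [Add α] [Add β] {F : Type*} [FunLike F α β] [AddHomClass F α β] {s : Set α}
    (hs : IsSidon s) (f : F) (hf : Set.InjOn f (s + s)) : IsSidon (f '' s) := by
  rintro _ ⟨a, ha, rfl⟩ _ ⟨b, hb, rfl⟩ _ ⟨c, hc, rfl⟩ _ ⟨d, hd, rfl⟩ h
  rw [← map_add, ← map_add] at h
  rcases hs a ha b hb c hc d hd (hf (Set.add_mem_add ha hb) (Set.add_mem_add hc hd) h) with
    ⟨rfl, rfl⟩ | ⟨rfl, rfl⟩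
  · exact Or.inl ⟨rfl, rfl⟩
  · exact Or.inr ⟨rfl, rfl⟩

theorem injOn_sub_offDiag [AddCommGroup α] {s : Set α} (hs : IsSidon s) :
    Set.InjOn (fun q : α × α => q.1 - q.2) s.offDiag := by
  rintro ⟨a, b⟩ ⟨ha, hb, hab⟩ ⟨c, d⟩ ⟨hc, hd, -⟩ h
  rcases hs a ha d hd c hc b hb (sub_eq_sub_iff_add_eq_add.1 h) with ⟨rfl, rfl⟩ | ⟨rfl, -⟩
  · rfl
  · exact absurd rfl hab

theorem card_image_sub_offDiag [AddCommGroup α] [DecidableEq α] {s : Finset α}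
    (hs : IsSidon (s : Set α)) : #(s.offDiag.image fun q => q.1 - q.2) = #s * (#s - 1) := by
  rw [card_image_of_injOn (coe_offDiag s ▸ hs.injOn_sub_offDiag), offDiag_card, Nat.mul_sub_one]

end IsSidon

theorem Nat.not_dvd_one_add_pow {b : ℕ} (hb : 3 ≤ b) (e : ℕ) : ¬ b ∣ 1 + b ^ e := by
  intro h
  cases e with
  | zero => exact absurd (Nat.le_of_dvd two_pos h) (by omega)
  | succ e =>
    rw [Nat.dvd_add_left (dvd_pow_self b e.succ_ne_zero)] at h
    exact absurd (Nat.le_of_dvd one_pos h) (by omega)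

section PowersWithZero

variable {b : ℕ}

theorem pow_ne_pow_add_pow (hb : 3 ≤ b) (j c d : ℕ) : b ^ j ≠ b ^ c + b ^ d := by
  intro h
  wlog hcd : c ≤ d generalizing c d
  · exact this d c (by omega) (by omega)
  have hb1 : 1 < b := by omega
  have hcj : c < j := by
    have := pow_pos (by omega : 0 < b) d
    exact (pow_lt_pow_iff_right₀ hb1).1 (by omega)
  have hfactor : b ^ j = b ^ c * (1 + b ^ (d - c)) := by
    rw [mul_add, mul_one, ← pow_add, Nat.add_sub_cancel' hcd, h]
  have hdvd : b ^ c * b ∣ b ^ c * (1 + b ^ (d - c)) :=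
    hfactor ▸ pow_succ b c ▸ pow_dvd_pow b hcj
  exact Nat.not_dvd_one_add_pow hb _ (Nat.dvd_of_mul_dvd_mul_left (by positivity) hdvd)

theorem add_ne_add_of_lt_of_lt (hb : 3 ≤ b) {x y u v : ℕ}
    (hx : x ∈ insert 0 (Set.range (b ^ ·))) (hy : y ∈ insert 0 (Set.range (b ^ ·)))
    (hu : u ∈ insert 0 (Set.range (b ^ ·))) (hv : v ∈ insert 0 (Set.range (b ^ ·)))
    (hxu : x < u) (hxv : x < v) : x + y ≠ u + v := by
  intro h
  have hb1 : 1 < b := by omega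
  obtain ⟨c, rfl⟩ : u ∈ Set.range (b ^ ·) := hu.resolve_left (by omega)
  obtain ⟨d, rfl⟩ : v ∈ Set.range (b ^ ·) := hv.resolve_left (by omega)
  obtain ⟨j, rfl⟩ : y ∈ Set.range (b ^ ·) := hy.resolve_left (by omega)
  beta_reduce at hxu hxv h
  rcases hx with rfl | ⟨i, rfl⟩
  · exact pow_ne_pow_add_pow hb j c d (by omega)
  · beta_reduce at hxu hxv h
    have hic : i < c := (pow_lt_pow_iff_right₀ hb1).1 hxu
    have hid : i < d := (pow_lt_pow_iff_right₀ hb1).1 hxv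
    have hij : i < j := (pow_lt_pow_iff_right₀ hb1).1 (by omega)
    have hdvd : b ^ (i + 1) ∣ b ^ i := by
      rw [← Nat.dvd_add_left (pow_dvd_pow b hij)]
      exact h ▸ dvd_add (pow_dvd_pow b hic) (pow_dvd_pow b hid)
    exact absurd (Nat.le_of_dvd (by positivity) hdvd)
      (not_le.2 (pow_lt_pow_right₀ hb1 i.lt_succ_self))

theorem min_le_min_of_add_eq_add (hb : 3 ≤ b) {x y u v : ℕ}
    (hx : x ∈ insert 0 (Set.range (b ^ ·))) (hy : y ∈ insert 0 (Set.range (b ^ ·)))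
    (hu : u ∈ insert 0 (Set.range (b ^ ·))) (hv : v ∈ insert 0 (Set.range (b ^ ·)))
    (h : x + y = u + v) : min u v ≤ min x y := by
  by_contra! hlt
  rcases min_choice x y with hm | hm <;> rw [hm] at hlt
  · exact add_ne_add_of_lt_of_lt hb hx hy hu hv (by omega) (by omega) h
  · exact add_ne_add_of_lt_of_lt hb hy hx hu hv (by omega) (by omega) (by omega)

theorem isSidon_insert_zero_range_pow (hb : 3 ≤ b) :
    IsSidon (insert 0 (Set.range (b ^ ·)) : Set ℕ) := by
  intro a ha a' ha' c hc c' hc' h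
  have := min_le_min_of_add_eq_add hb ha ha' hc hc' h
  have := min_le_min_of_add_eq_add hb hc hc' ha ha' h.symm
  omega

end PowersWithZero

theorem union_image_eq_image_sub_offDiag {R : Type*} [AddGroup R] [DecidableEq R] {f : ℕ → R}
    {m : ℕ} (hf0 : ∀ k < m, f k ≠ 0) (hf : Set.InjOn f (range m)) :
    (Icc 1 m).image (fun i => f (i - 1)) ∪ (Icc 1 m).image (fun i => -f (i - 1)) ∪
      ((range m ×ˢ range m).filter (fun q => q.1 < q.2)).image (fun q => f q.2 - f q.1) ∪
      ((range m ×ˢ range m).filter (fun q => q.1 < q.2)).image (fun q => f q.1 - f q.2) =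
    (insert 0 ((range m).image f)).offDiag.image (fun q => q.1 - q.2) := by
  have hne {i j : ℕ} (hi : i < m) (hj : j < m) (hij : i ≠ j) : f i ≠ f j :=
    fun h => hij (hf (mem_range.2 hi) (mem_range.2 hj) h)
  ext z
  simp only [mem_union, mem_image, mem_offDiag, mem_insert, mem_filter, mem_product, mem_range,
    mem_Icc, Prod.exists]
  constructor
  · rintro (((⟨i, hi, rfl⟩ | ⟨i, hi, rfl⟩) | ⟨i, j, ⟨⟨hi, hj⟩, hij⟩, rfl⟩) |
      ⟨i, j, ⟨⟨hi, hj⟩, hij⟩, rfl⟩)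
    · exact ⟨_, 0, ⟨.inr ⟨i - 1, by omega, rfl⟩, .inl rfl, hf0 _ (by omega)⟩, sub_zero _⟩
    · exact ⟨0, _, ⟨.inl rfl, .inr ⟨i - 1, by omega, rfl⟩, (hf0 _ (by omega)).symm⟩, zero_sub _⟩
    · exact ⟨_, _, ⟨.inr ⟨j, hj, rfl⟩, .inr ⟨i, hi, rfl⟩, hne hj hi hij.ne'⟩, rfl⟩
    · exact ⟨_, _, ⟨.inr ⟨i, hi, rfl⟩, .inr ⟨j, hj, rfl⟩, hne hi hj hij.ne⟩, rfl⟩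
  · rintro ⟨a, b, ⟨ha, hb, hab⟩, rfl⟩
    rcases ha with rfl | ⟨i, hi, rfl⟩ <;> rcases hb with rfl | ⟨j, hj, rfl⟩
    · exact absurd rfl hab
    · exact .inl (.inl (.inr ⟨j + 1, by omega, by simp⟩))
    · exact .inl (.inl (.inl ⟨i + 1, by omega, by simp⟩))
    · rcases lt_trichotomy i j with hij | rfl | hji
      · exact .inr ⟨i, j, ⟨⟨hi, hj⟩, hij⟩, rfl⟩
      · exact absurd rfl hab
      · exact .inl (.inr ⟨j, i, ⟨⟨hj, hi⟩, hji⟩, rfl⟩)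

theorem card_insert_zero_image_range {R : Type*} [Zero R] [DecidableEq R] {f : ℕ → R}
    {m : ℕ} (hf0 : ∀ k < m, f k ≠ 0) (hf : Set.InjOn f (range m)) :
    #(insert 0 ((range m).image f)) = m + 1 := by
  rw [card_insert_of_notMem, card_image_of_injOn hf, card_range]
  simp only [mem_image, mem_range, not_exists, not_and]
  exact hf0

theorem ZMod.natCast_injOn_Iio (n : ℕ) : Set.InjOn (Nat.cast : ℕ → ZMod n) (Set.Iio n) :=
  fun a ha b hb h => by rw [← ZMod.val_natCast_of_lt ha, h, ZMod.val_natCast_of_lt hb]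

section ZModPowers

variable {b m p : ℕ}

theorem le_pow_pred_of_mem_insert_zero_image_pow (hb : 0 < b) {x : ℕ}
    (hx : x ∈ insert 0 ((b ^ ·) '' Set.Iio m)) : x ≤ b ^ (m - 1) := by
  rcases hx with rfl | ⟨k, hk, rfl⟩
  · exact Nat.zero_le _
  · exact Nat.pow_le_pow_right hb (by rw [Set.mem_Iio] at hk; omega)

theorem pow_lt_of_pow_pred_lt (hb : 0 < b) (hpm : b ^ (m - 1) < p) {k : ℕ} (hk : k < m) :
    b ^ k < p :=
  (le_pow_pred_of_mem_insert_zero_image_pow hb (.inr ⟨k, hk, rfl⟩)).trans_lt hpm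

theorem ZMod.natCast_pow_ne_zero (hb : 0 < b) (hpm : b ^ (m - 1) < p) {k : ℕ} (hk : k < m) :
    (b : ZMod p) ^ k ≠ 0 := by
  simpa using (ZMod.natCast_injOn_Iio p).ne (pow_lt_of_pow_pred_lt hb hpm hk)
    (show 0 < p by omega) (by positivity)

theorem ZMod.natCast_pow_injOn_range (hb : 2 ≤ b) (hpm : b ^ (m - 1) < p) :
    Set.InjOn (fun k => (b : ZMod p) ^ k) (range m) := fun i hi j hj h =>
  Nat.pow_right_injective hb <| ZMod.natCast_injOn_Iio p
    (pow_lt_of_pow_pred_lt (by omega) hpm (mem_range.1 hi))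
    (pow_lt_of_pow_pred_lt (by omega) hpm (mem_range.1 hj)) (by push_cast; exact h)

theorem ZMod.isSidon_insert_zero_image_pow (hb : 3 ≤ b) (hpm : 2 * b ^ (m - 1) < p) :
    IsSidon (↑(insert 0 ((range m).image fun k => (b : ZMod p) ^ k)) : Set (ZMod p)) := by
  have hT : (↑(insert 0 ((range m).image fun k => (b : ZMod p) ^ k)) : Set (ZMod p)) =
      Nat.castAddMonoidHom (ZMod p) '' insert 0 ((b ^ ·) '' Set.Iio m) := by
    simp [Set.image_insert_eq, Set.image_image]
  rw [hT]
  refine ((isSidon_insert_zero_range_pow hb).mono ?_).image _ ((ZMod.natCast_injOn_Iio p).mono ?_)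
  · exact Set.insert_subset_insert (Set.image_subset_range _ _)
  · rintro _ ⟨x, hx, y, hy, rfl⟩
    have := le_pow_pred_of_mem_insert_zero_image_pow (by omega) hx
    have := le_pow_pred_of_mem_insert_zero_image_pow (by omega) hy
    show x + y < p; omega

end ZModPowers

theorem stmt_10_general (m p : ℕ) (hpm : 2 * 3 ^ (m - 1) < p) :
    (((Finset.Icc 1 m).image (fun i => (3 : ZMod p) ^ (i - 1)) ∪
      (Finset.Icc 1 m).image (fun i => -(3 : ZMod p) ^ (i - 1)) ∪
      ((Finset.range m ×ˢ Finset.range m).filter (fun q => q.1 < q.2)).image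
        (fun q => (3 : ZMod p) ^ q.2 - (3 : ZMod p) ^ q.1) ∪
      ((Finset.range m ×ˢ Finset.range m).filter (fun q => q.1 < q.2)).image
        (fun q => (3 : ZMod p) ^ q.1 - (3 : ZMod p) ^ q.2)).card
      = m * (m + 1)) := by
  have hpm' : 3 ^ (m - 1) < p := by omega
  have hf0 : ∀ k < m, (3 : ZMod p) ^ k ≠ 0 := fun k hk => by
    simpa only [Nat.cast_ofNat] using ZMod.natCast_pow_ne_zero (b := 3) (by norm_num) hpm' hk
  have hf : Set.InjOn (fun k => (3 : ZMod p) ^ k) (range m) := by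
    simpa only [Nat.cast_ofNat] using ZMod.natCast_pow_injOn_range (b := 3) (by norm_num) hpm'
  have hsidon := ZMod.isSidon_insert_zero_image_pow (b := 3) (p := p) le_rfl hpm
  simp only [Nat.cast_ofNat] at hsidon
  rw [union_image_eq_image_sub_offDiag hf0 hf, hsidon.card_image_sub_offDiag,
    card_insert_zero_image_range hf0 hf, Nat.add_sub_cancel, mul_comm]

theorem stmt_10 (m p : ℕ) (hm : 2 ≤ m) (hp : p.Prime) (hpm : 2 * 3 ^ (m - 1) < p) :
    (((Finset.Icc 1 m).image (fun i => (3 : ZMod p) ^ (i - 1)) ∪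
      (Finset.Icc 1 m).image (fun i => -(3 : ZMod p) ^ (i - 1)) ∪
      ((Finset.range m ×ˢ Finset.range m).filter (fun q => q.1 < q.2)).image
        (fun q => (3 : ZMod p) ^ q.2 - (3 : ZMod p) ^ q.1) ∪
      ((Finset.range m ×ˢ Finset.range m).filter (fun q => q.1 < q.2)).image
        (fun q => (3 : ZMod p) ^ q.1 - (3 : ZMod p) ^ q.2)).card
      = m * (m + 1)) :=
  stmt_10_general m p hpm
end

section
/- Let G = K_m be the complete graph on vertices v_1,...,v_m, let p be a prime with p > 2·3^{m-1}, and define W((v_q,v_r)) ∈ F_p^m for q < r by coordinates w_t = 0 for t ∉ {q,r}, w_q = 3^{r-q-1}, and w_r = 1. Then W is a proper weight function: no simple path or simple even cycle (e_1,...,e_d) in K_m satisfies W(e_1) - W(e_2) + ... + (-1)^{d-1}W(e_d) = 0. -/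
/-- Alternating sum `l₀ - l₁ + l₂ - ...` of a list in an additive commutative group. -/
def altSum {A : Type*} [AddCommGroup A] (l : List A) : A :=
  (l.zipIdx.map (fun q => ((-1 : ℤ) ^ q.2) • q.1)).sum

/-- A walk that is a simple path or a simple cycle of even length. -/
def IsPathOrEvenCycle {V : Type*} {G : SimpleGraph V} {u v : V} (w : G.Walk u v) : Prop :=
  w.IsPath ∨ ∃ h : v = u, (w.copy rfl h).IsCycle ∧ Even w.length

/-
Look at the coordinate of the smallest vertex `t` on the walk. Only the edges at `t` contribute
to it, each with `3 ^ (x - t - 1)` where `x` is its other end. On a path these are the (at most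
two) edges around `t`; an even cycle, rotated to start at `t`, has its first and last edge there,
and evenness makes their signs opposite. So the coordinate is `± 3 ^ a` or `± (3 ^ a - 3 ^ b)`
with `a ≠ b`, and it is nonzero mod `p` because `3 ^ (m - 1) < p` keeps `0` and the powers
`3 ^ a` distinct mod `p`.
-/
theorem neg_one_pow_smul_eq_zero_iff {A : Type*} [AddCommGroup A] (n : ℕ) (x : A) :
    (-1 : ℤ) ^ n • x = 0 ↔ x = 0 := by
  rcases neg_one_pow_eq_or ℤ n with h | h <;> simp [h]

namespace List

variable {A B : Type*} [AddCommGroup A] [AddCommGroup B]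

theorem sum_map_zipIdx_neg_one_pow_smul (l : List A) (n : ℕ) :
    ((l.zipIdx n).map fun q => ((-1 : ℤ) ^ q.2) • q.1).sum =
      (-1 : ℤ) ^ n • l.alternatingSum := by
  induction l generalizing n with
  | nil => simp
  | cons a l ih => simp [ih, pow_succ, sub_eq_add_neg]

theorem _root_.AddMonoidHom.map_alternatingSum (f : A →+ B) (l : List A) :
    f l.alternatingSum = (l.map f).alternatingSum := by
  induction l with
  | nil => simp
  | cons a l ih => simp [ih]

theorem alternatingSum_rotate_one {l : List A} (hl : Even l.length) :
    (l.rotate 1).alternatingSum = -l.alternatingSum := by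
  cases l with
  | nil => simp
  | cons a l =>
    have hodd : Odd l.length := by simpa [Nat.even_add_one] using hl
    simp [alternatingSum_append, hodd.neg_one_pow, sub_eq_add_neg]

theorem alternatingSum_rotate {l : List A} (hl : Even l.length) (n : ℕ) :
    (l.rotate n).alternatingSum = (-1 : ℤ) ^ n • l.alternatingSum := by
  induction n with
  | zero => simp
  | succ n ih =>
    rw [← rotate_rotate, alternatingSum_rotate_one (by rwa [length_rotate]), ih, pow_succ]
    simp

theorem IsRotated.alternatingSum_eq_zero_iff {l l' : List A} (h : l ~r l') (hl : Even l.length) :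
    l.alternatingSum = 0 ↔ l'.alternatingSum = 0 := by
  obtain ⟨n, rfl⟩ := h
  rw [alternatingSum_rotate hl, neg_one_pow_smul_eq_zero_iff]

end List

theorem altSum_eq_alternatingSum {A : Type*} [AddCommGroup A] (l : List A) :
    altSum l = l.alternatingSum := by
  rw [altSum, List.sum_map_zipIdx_neg_one_pow_smul, pow_zero, one_smul]

namespace SimpleGraph.Walk

variable {V A : Type*} [AddCommGroup A] {G : SimpleGraph V} (g : Sym2 V → A)

theorem alternatingSum_map_edges_eq_zero {t : V} (hg : ∀ e ∈ G.edgeSet, t ∉ e → g e = 0)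
    {u v : V} (w : G.Walk u v) (ht : t ∉ w.support) : (w.edges.map g).alternatingSum = 0 := by
  induction w with
  | nil => simp
  | @cons x y _ h w ih =>
    simp only [support_cons, List.mem_cons, not_or] at ht
    have hy : t ≠ y := fun hty => ht.2 (hty ▸ w.start_mem_support)
    rw [edges_cons, List.map_cons, List.alternatingSum_cons, ih ht.2,
      hg _ h (by simp [ht.1, hy]), sub_zero]

theorem alternatingSum_map_edges_reverse {u v : V} (w : G.Walk u v) :
    (w.edges.map g).alternatingSum =
      (-1 : ℤ) ^ (w.length + 1) • (w.reverse.edges.map g).alternatingSum := by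
  rw [edges_reverse, List.map_reverse, List.alternatingSum_reverse, List.length_map, length_edges,
    smul_smul, ← pow_add, ← two_mul, pow_mul, neg_one_sq, one_pow, one_smul]

theorem penultimate_ne_snd_of_isPath_append {u v w : V} {p : G.Walk u v} {q : G.Walk v w}
    (h : (p.append q).IsPath) (hnil : ¬(p.append q).Nil) : p.penultimate ≠ q.snd := by
  by_cases hq : q.Nil
  · have hp : ¬p.Nil := fun hp => hnil (nil_append_iff.2 ⟨hp, hq⟩)
    obtain rfl := hq.eq
    rw [hq.eq_nil]
    exact (adj_penultimate hp).ne
  · have hdisj := List.disjoint_of_nodup_append (support_append p q ▸ h.support_nodup)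
    exact fun heq => hdisj (getVert_mem_support _ _) (heq ▸ snd_mem_tail_support hq)

end SimpleGraph.Walk

section PowersOfThree

variable {m p : ℕ}

def IsPowersOfThreeWeight (W : Sym2 (Fin m) → Fin m → ZMod p) : Prop :=
  ∀ q r : Fin m, q < r → W s(q, r) = fun t =>
    if t = q then (3 : ZMod p) ^ ((r : ℕ) - (q : ℕ) - 1) else if t = r then 1 else 0

/- `coordWeight t x` is the `t`-th coordinate of `W s(t, x)` for `t < x`, read in `ℕ`; its value
`0` at `x = t` is what a walk that never leaves `t` contributes. -/
def coordWeight (t x : Fin m) : ℕ :=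
  if x = t then 0 else 3 ^ ((x : ℕ) - t - 1)

theorem coordWeight_le (t x : Fin m) : coordWeight t x ≤ 3 ^ (m - 1) := by
  unfold coordWeight
  split_ifs
  · exact Nat.zero_le _
  · exact Nat.pow_le_pow_right (by norm_num) (by omega)

theorem coordWeight_injOn {t x y : Fin m} (hx : t ≤ x) (hy : t ≤ y)
    (h : coordWeight t x = coordWeight t y) : x = y := by
  unfold coordWeight at h
  split_ifs at h with hxt hyt hyt
  · exact hxt.trans hyt.symm
  · exact absurd h.symm (by positivity)
  · exact absurd h (by positivity)
  · have := Nat.pow_right_injective (Nat.le_succ 2) h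
    exact Fin.ext (by omega)

theorem natCast_coordWeight_injOn (hp : 3 ^ (m - 1) < p) {t x y : Fin m} (hx : t ≤ x)
    (hy : t ≤ y) (h : (coordWeight t x : ZMod p) = coordWeight t y) : x = y := by
  rw [ZMod.natCast_eq_natCast_iff', Nat.mod_eq_of_lt ((coordWeight_le t x).trans_lt hp),
    Nat.mod_eq_of_lt ((coordWeight_le t y).trans_lt hp)] at h
  exact coordWeight_injOn hx hy h

end PowersOfThree

namespace IsPowersOfThreeWeight

open SimpleGraph Walk

variable {m p : ℕ} {W : Sym2 (Fin m) → Fin m → ZMod p}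

theorem apply_of_lt (hW : IsPowersOfThreeWeight W) {t x : Fin m} (h : t < x) :
    W s(t, x) t = coordWeight t x := by
  simp [hW t x h, coordWeight, h.ne']

theorem apply_eq_zero (hW : IsPowersOfThreeWeight W) {t : Fin m} (e : Sym2 (Fin m))
    (he : e ∈ (⊤ : SimpleGraph (Fin m)).edgeSet) (ht : t ∉ e) : W e t = 0 := by
  induction e using Sym2.ind with
  | _ q r =>
    have hqr : q ≠ r := he
    rw [Sym2.mem_iff, not_or] at ht
    rcases hqr.lt_or_gt with h | h
    · simp [hW q r h, ht.1, ht.2]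
    · rw [Sym2.eq_swap, hW r q h]
      simp [ht.1, ht.2]

theorem alternatingSum_coord_of_isPath (hW : IsPowersOfThreeWeight W) {t v : Fin m}
    (a : (⊤ : SimpleGraph (Fin m)).Walk t v) (ha : a.IsPath)
    (hmin : ∀ z ∈ a.support, t ≤ z) :
    (a.edges.map (W · t)).alternatingSum = coordWeight t a.snd := by
  cases a with
  | nil => simp [coordWeight]
  | @cons _ x _ h a =>
    have hta : t ∉ a.support := ((cons_isPath_iff h a).1 ha).2
    have htx : t < x := (hmin x (by simp)).lt_of_ne h.ne
    rw [edges_cons, List.map_cons, List.alternatingSum_cons,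
      alternatingSum_map_edges_eq_zero _ hW.apply_eq_zero a hta, sub_zero, snd_cons,
      hW.apply_of_lt htx]

theorem alternatingSum_coord_ne_zero_of_isPath (hW : IsPowersOfThreeWeight W)
    (hp : 3 ^ (m - 1) < p) {u v t : Fin m} (w : (⊤ : SimpleGraph (Fin m)).Walk u v)
    (hw : w.IsPath) (hnil : ¬w.Nil) (ht : t ∈ w.support) (hmin : ∀ z ∈ w.support, t ≤ z) :
    (w.edges.map (W · t)).alternatingSum ≠ 0 := by
  set w₁ := w.takeUntil t ht
  set w₂ := w.dropUntil t ht
  have hspec : w₁.append w₂ = w := w.take_spec ht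
  have hmin₁ : ∀ z ∈ w₁.reverse.support, t ≤ z := fun z hz =>
    hmin z (w.support_takeUntil_subset_support ht (by simpa using hz))
  have hmin₂ : ∀ z ∈ w₂.support, t ≤ z := fun z hz =>
    hmin z (w.support_dropUntil_subset_support ht hz)
  have hsum : (w.edges.map (W · t)).alternatingSum = (-1 : ℤ) ^ w₁.length •
      ((coordWeight t w₂.snd : ZMod p) - coordWeight t w₁.reverse.snd) := by
    rw [← hspec, edges_append, List.map_append, List.alternatingSum_append,
      alternatingSum_map_edges_reverse,
      hW.alternatingSum_coord_of_isPath _ (hw.takeUntil ht).reverse hmin₁,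
      hW.alternatingSum_coord_of_isPath _ (hw.dropUntil ht) hmin₂, List.length_map, length_edges,
      pow_succ', mul_smul, neg_one_smul, smul_sub]
    abel
  rw [hsum, Ne, neg_one_pow_smul_eq_zero_iff, sub_eq_zero]
  intro h
  refine penultimate_ne_snd_of_isPath_append (p := w₁) (q := w₂) (by rwa [hspec])
    (by rwa [hspec]) (snd_reverse w₁ ▸ natCast_coordWeight_injOn hp ?_ ?_ h.symm)
  · exact hmin₁ _ (getVert_mem_support _ _)
  · exact hmin₂ _ (getVert_mem_support _ _)

theorem alternatingSum_coord_ne_zero_of_isCycle (hW : IsPowersOfThreeWeight W)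
    (hp : 3 ^ (m - 1) < p) {t : Fin m} (c : (⊤ : SimpleGraph (Fin m)).Walk t t)
    (hc : c.IsCycle) (heven : Even c.length) (hmin : ∀ z ∈ c.support, t ≤ z) :
    (c.edges.map (W · t)).alternatingSum ≠ 0 := by
  cases c with
  | nil => exact absurd rfl hc.ne_nil
  | @cons _ x _ h d =>
    have hd : d.reverse.IsPath := ((cons_isCycle_iff d h).1 hc).1.reverse
    have hdnil : ¬d.Nil := fun hd => by
      have := hc.three_le_length
      simp [length_eq_zero_iff.2 hd] at this
    have htx : t < x := (hmin x (by simp)).lt_of_ne h.ne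
    have hmin' : ∀ z ∈ d.reverse.support, t ≤ z := fun z hz => hmin z (by simp_all)
    have hsign : (-1 : ℤ) ^ (d.length + 1) = 1 := Even.neg_one_pow (by simpa using heven)
    rw [edges_cons, List.map_cons, List.alternatingSum_cons, alternatingSum_map_edges_reverse,
      hsign, one_smul, hW.alternatingSum_coord_of_isPath _ hd hmin', hW.apply_of_lt htx,
      sub_ne_zero]
    intro hx
    apply hc.snd_ne_penultimate
    rw [snd_cons, penultimate_cons_of_not_nil _ _ hdnil, ← snd_reverse]
    exact natCast_coordWeight_injOn hp htx.le (hmin' _ (getVert_mem_support _ _)) hx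

theorem alternatingSum_coord_ne_zero (hW : IsPowersOfThreeWeight W)
    (hp : 3 ^ (m - 1) < p) {u v t : Fin m} (w : (⊤ : SimpleGraph (Fin m)).Walk u v)
    (hw : IsPathOrEvenCycle w) (hnil : ¬w.Nil) (ht : t ∈ w.support)
    (hmin : ∀ z ∈ w.support, t ≤ z) : (w.edges.map (W · t)).alternatingSum ≠ 0 := by
  rcases hw with hpath | ⟨rfl, hcyc, heven⟩
  · exact hW.alternatingSum_coord_ne_zero_of_isPath hp w hpath hnil ht hmin
  · rw [copy_rfl_rfl] at hcyc
    rw [Ne, ← ((w.rotate_edges t ht).map _).alternatingSum_eq_zero_iff (by simpa using heven)]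
    exact hW.alternatingSum_coord_ne_zero_of_isCycle hp _ (hcyc.rotate ht) (by simpa using heven)
      fun z hz => hmin z ((mem_support_rotate_iff _ _ _).1 hz)

end IsPowersOfThreeWeight

theorem stmt_18_general (m p : ℕ) (hpm : 2 * 3 ^ (m - 1) < p)
    (W : Sym2 (Fin m) → (Fin m → ZMod p))
    (hW : ∀ q r : Fin m, q < r →
      W s(q, r) = fun t =>
        if t = q then (3 : ZMod p) ^ ((r : ℕ) - (q : ℕ) - 1)
        else if t = r then 1 else 0) :
    ∀ (u v : Fin m) (w : (⊤ : SimpleGraph (Fin m)).Walk u v),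
      0 < w.length → IsPathOrEvenCycle w → altSum (w.edges.map W) ≠ 0 := by
  intro u v w hlen hw hzero
  obtain ⟨t, ht, hmin⟩ := w.support.toFinset.exists_min_image id ⟨u, by simp⟩
  simp only [List.mem_toFinset, id] at ht hmin
  refine IsPowersOfThreeWeight.alternatingSum_coord_ne_zero hW (by omega) w hw
    (SimpleGraph.Walk.not_nil_iff_lt_length.2 hlen) ht hmin ?_
  have hcoord := (Pi.evalAddMonoidHom (fun _ => ZMod p) t).map_alternatingSum (w.edges.map W)
  simpa [List.map_map, Function.comp_def, ← altSum_eq_alternatingSum, hzero] using hcoord.symm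

theorem stmt_18 (m p : ℕ) (hp : p.Prime) [NeZero p] (hpm : 2 * 3 ^ (m - 1) < p)
    (W : Sym2 (Fin m) → (Fin m → ZMod p))
    (hW : ∀ q r : Fin m, q < r →
      W s(q, r) = fun t =>
        if t = q then (3 : ZMod p) ^ ((r : ℕ) - (q : ℕ) - 1)
        else if t = r then 1 else 0) :
    ∀ (u v : Fin m) (w : (⊤ : SimpleGraph (Fin m)).Walk u v),
      0 < w.length → IsPathOrEvenCycle w → altSum (w.edges.map W) ≠ 0 :=
  stmt_18_general m p hpm W hW
end
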